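/- Let E ∈ M_n(ℝ) be tropically idempotent and let F be the componentwise-minimum matrix whose i-th column F_i is the infimum in ℝ^n of all u ∈ C(E) with u_i ≥ 0, assuming C(E) is min-plus convex (so these infima lie in C(E)). Then F is tropically idempotent, has all diagonal entries 0, and C(F) = C(E). -/
import Mathlib


open Finset

/-- Tropical (max-plus) matrix multiplication on n × n real matrices. -/
noncomputable def tmul {n : ℕ} [NeZero n] (A B : Matrix (Fin n) (Fin n) ℝ) :
    Matrix (Fin n) (Fin n) ℝ :=
  fun i j => univ.sup' univ_nonempty (fun k => A i k + B k j)

/-- Tropical action of a matrix on a vector: (A ⊗ x)_i = max_k (A_{i,k} + x_k). -/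
noncomputable def tvec {n : ℕ} [NeZero n] (A : Matrix (Fin n) (Fin n) ℝ) (x : Fin n → ℝ) :
    Fin n → ℝ :=
  fun i => univ.sup' univ_nonempty (fun k => A i k + x k)

lemma tvec_shift {n : ℕ} [NeZero n] (E : Matrix (Fin n) (Fin n) ℝ) (u : Fin n → ℝ)
    (hu : tvec E u = u) (c : ℝ) : tvec E (fun j => u j + c) = fun j => u j + c := by
  funext j
  have h : tvec E (fun j => u j + c) j = tvec E u j + c := by
    simp only [tvec]
    rw [Finset.sup'_add]
    simp [add_assoc]
  rw [h, hu]

lemma tvec_mono {n : ℕ} [NeZero n] (E : Matrix (Fin n) (Fin n) ℝ) {x y : Fin n → ℝ}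
    (h : x ≤ y) : tvec E x ≤ tvec E y := by
  intro j
  exact Finset.sup'_le _ _ fun k _ =>
    Finset.le_sup'_of_le _ (Finset.mem_univ k) (by linarith [h k])

lemma col_fixed {n : ℕ} [NeZero n] (E : Matrix (Fin n) (Fin n) ℝ) (hE : tmul E E = E)
    (i : Fin n) : tvec E (fun j => E j i) = fun j => E j i := by
  funext j
  have h := congrFun (congrFun hE j) i
  simpa [tmul, tvec] using h

/-- Pointwise inf of finitely many fixed points is a fixed point. -/
lemma inf_fixed {n : ℕ} [NeZero n] (E : Matrix (Fin n) (Fin n) ℝ)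
    (hmin : ∀ x y : Fin n → ℝ, tvec E x = x → tvec E y = y →
      tvec E (fun i => min (x i) (y i)) = fun i => min (x i) (y i))
    {ι : Type*} (s : Finset ι) (hs : s.Nonempty) (g : ι → Fin n → ℝ)
    (hg : ∀ k ∈ s, tvec E (g k) = g k) :
    tvec E (fun j => s.inf' hs (fun k => g k j)) = fun j => s.inf' hs (fun k => g k j) := by
  classical
  induction hs using Finset.Nonempty.cons_induction with
  | singleton a => simpa using hg a (by simp)
  | cons a s ha hne ih =>
    have hga : tvec E (g a) = g a := hg a (Finset.mem_cons_self a s)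
    have hrest := ih (fun k hk => hg k (Finset.mem_cons_of_mem hk))
    have := hmin (g a) (fun j => s.inf' hne (fun k => g k j)) hga hrest
    simp only [Finset.inf'_cons hne]
    convert this using 2

/-- Let E be tropically idempotent with C(E) = {x : E ⊗ x = x} min-plus convex,
and let F be the matrix whose i-th column is the infimum in ℝ^n of all
u ∈ C(E) with u_i ≥ 0 (assumed to exist, as a greatest lower bound).
Then F is tropically idempotent, has all diagonal entries 0, and C(F) = C(E). -/
theorem infimum_matrix_idempotent {n : ℕ} [NeZero n]
    (E : Matrix (Fin n) (Fin n) ℝ) (hE : tmul E E = E)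
    (hmin : ∀ x y : Fin n → ℝ, tvec E x = x → tvec E y = y →
      tvec E (fun i => min (x i) (y i)) = fun i => min (x i) (y i))
    (F : Matrix (Fin n) (Fin n) ℝ)
    (hF : ∀ i, IsGLB {u : Fin n → ℝ | tvec E u = u ∧ 0 ≤ u i} (fun j => F j i)) :
    tmul F F = F ∧ (∀ i, F i i = 0) ∧
    Set.range (tvec F) = {x : Fin n → ℝ | tvec E x = x} := by
  classical
  set S : Fin n → Set (Fin n → ℝ) := fun i => {u | tvec E u = u ∧ 0 ≤ u i} with hS
  have hcolS : ∀ i : Fin n, (fun j => E j i + -(E i i)) ∈ S i := fun i =>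
    ⟨tvec_shift E _ (col_fixed E hE i) _, by simp⟩
  -- shifted fixed points: if x fixed, (x - x k) ∈ S k
  have hshiftS : ∀ (x : Fin n → ℝ), tvec E x = x → ∀ k, (fun l => x l + -(x k)) ∈ S k :=
    fun x hx k => ⟨tvec_shift E x hx _, by simp⟩
  -- coordinatewise inf property of the GLB
  have hcoord : ∀ i k : Fin n, ∀ c : ℝ, (∀ u ∈ S i, c ≤ u k) → c ≤ F k i := by
    intro i k c hc
    set lb : Fin n → ℝ := fun j => if j = k then max c (F j i) else F j i with hlb
    have hlbmem : lb ∈ lowerBounds (S i) := by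
      intro u hu j
      by_cases hj : j = k
      · subst hj
        simp only [lb, if_pos rfl]
        exact max_le (hc u hu) ((hF i).1 hu j)
      · simp only [lb, if_neg hj]
        exact (hF i).1 hu j
    have h := (hF i).2 hlbmem k
    simp only [lb, if_pos rfl] at h
    exact le_trans (le_max_left _ _) h
  have happrox : ∀ i k : Fin n, ∀ ε : ℝ, 0 < ε → ∃ u ∈ S i, u k < F k i + ε := by
    intro i k ε hε
    by_contra h
    push_neg at h
    have := hcoord i k (F k i + ε) h
    linarith
  -- F columns are fixed points of tvec E
  have hFfix : ∀ i : Fin n, tvec E (fun j => F j i) = fun j => F j i := by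
    intro i
    have hle : tvec E (fun j => F j i) ≤ fun j => F j i := by
      apply (hF i).2
      intro u hu
      have h1 : tvec E (fun j => F j i) ≤ tvec E u := tvec_mono E ((hF i).1 hu)
      rw [hu.1] at h1
      exact h1
    have hge : (fun j => F j i) ≤ tvec E (fun j => F j i) := by
      intro j
      by_contra hcon
      push_neg at hcon
      set T := tvec E (fun j => F j i) j with hT
      set ε := (F j i - T) / 2 with hεdef
      have hε : 0 < ε := by
        simp only [hεdef]
        linarith
      choose u hu hult using fun k => happrox i k ε hε
      set v : Fin n → ℝ := fun l => univ.inf' univ_nonempty (fun k => u k l) with hv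
      have hvfix : tvec E v = v := inf_fixed E hmin univ univ_nonempty u (fun k _ => (hu k).1)
      have hvS : v ∈ S i := ⟨hvfix, Finset.le_inf' _ _ fun k _ => (hu k).2⟩
      have hFv : ∀ l, F l i ≤ v l := (hF i).1 hvS
      have hchain : F j i ≤ T + ε := by
        have h1 : F j i ≤ v j := hFv j
        have h2 : v j = tvec E v j := (congrFun hvfix j).symm
        have h3 : tvec E v j ≤ T + ε := by
          simp only [tvec, hT]
          rw [Finset.sup'_add]
          apply Finset.sup'_le
          intro k _
          have hvk : v k ≤ u k k := Finset.inf'_le _ (Finset.mem_univ k)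
          have := hult k
          have : E j k + v k ≤ E j k + F k i + ε := by linarith
          exact le_trans this (Finset.le_sup' (fun l => E j l + F l i + ε) (Finset.mem_univ k))
        linarith
      simp only [hεdef] at hchain
      linarith
    exact le_antisymm hle hge
  -- diagonal entries are 0
  have hdiag : ∀ i, F i i = 0 := by
    intro i
    have h1 : F i i ≤ 0 := by
      have := (hF i).1 (hcolS i) i
      simpa using this
    have h2 : (0:ℝ) ≤ F i i := hcoord i i 0 (fun u hu => hu.2)
    linarith
  -- tvec F fixes every fixed point of tvec E
  have hfix_of : ∀ x : Fin n → ℝ, tvec E x = x → tvec F x = x := by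
    intro x hx
    funext j
    apply le_antisymm
    · apply Finset.sup'_le
      intro k _
      have hmem := hshiftS x hx k
      have := (hF k).1 hmem j
      simp only at this
      linarith
    · have : F j j + x j ≤ tvec F x j :=
        Finset.le_sup' (fun k => F j k + x k) (Finset.mem_univ j)
      rw [hdiag j] at this
      linarith
  -- every tvec F x is a fixed point of tvec E
  have hrange : ∀ x : Fin n → ℝ, tvec E (tvec F x) = tvec F x := by
    intro x
    funext j
    simp only [tvec]
    calc univ.sup' univ_nonempty (fun l => E j l + univ.sup' univ_nonempty (fun k => F l k + x k))
        = univ.sup' univ_nonempty (fun l => univ.sup' univ_nonempty (fun k => E j l + (F l k + x k))) := by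
          refine Finset.sup'_congr _ rfl fun l _ => ?_
          rw [Finset.add_sup']
      _ = univ.sup' univ_nonempty (fun k => univ.sup' univ_nonempty (fun l => E j l + (F l k + x k))) :=
          Finset.sup'_comm _ _ _
      _ = univ.sup' univ_nonempty (fun k => F j k + x k) := by
          refine Finset.sup'_congr _ rfl fun k _ => ?_
          have h1 : (fun l => E j l + (F l k + x k)) = fun l => (E j l + F l k) + x k := by
            funext l; ring
          rw [h1, ← Finset.sup'_add]
          have h2 : univ.sup' univ_nonempty (fun l => E j l + F l k) = F j k :=
            congrFun (hFfix k) j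
          rw [h2]
  refine ⟨?_, hdiag, ?_⟩
  · funext j i
    have h1 : tmul F F j i = tvec F (fun l => F l i) j := rfl
    rw [h1, hfix_of _ (hFfix i)]
  · ext x
    constructor
    · rintro ⟨y, rfl⟩
      exact hrange y
    · intro hx
      exact ⟨x, hfix_of x hx⟩
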